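/- Let λ : [0,∞) → [0,∞) be a nonincreasing function with ∫₀^∞ s·λ(s) ds = b₀ < ∞. If y : [0,∞) → ℝ satisfies y'' = λ·y with y(0) = 0, y'(0) = 1, then for all t ≥ 0, t ≤ y(t) ≤ e^{b₀}·t. -/

import Mathlib

/-!
Since `λ ≥ 0`, the solution stays in the region where `y ≥ 0`, so `y'' = λ y ≥ 0` and `y'` is
nondecreasing with `y' ≥ y'(0) = 1`. The mean value theorem then sandwiches `y(t)` between
`t y'(0) = t` and `t y'(t)`. The second bound gives `(log y')' = λ y / y' ≤ t λ(t)`, and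
integrating yields `y'(t) ≤ exp (∫₀^t s λ(s) ds) ≤ e^{b₀}`.
-/

open Set MeasureTheory Real

theorem monotoneOn_Icc_of_hasDerivAt_nonneg {f f' : ℝ → ℝ} {a b : ℝ}
    (hf : ∀ x ∈ Icc a b, HasDerivAt f (f' x) x) (hf' : ∀ x ∈ Ioo a b, 0 ≤ f' x) :
    MonotoneOn f (Icc a b) :=
  monotoneOn_of_hasDerivWithinAt_nonneg (convex_Icc a b) (HasDerivAt.continuousOn hf)
    (fun x hx => (hf x (interior_subset hx)).hasDerivWithinAt) (by rwa [interior_Icc])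

theorem mul_deriv_le_sub_le_mul_deriv {f f' : ℝ → ℝ} {a b : ℝ} (hab : a ≤ b)
    (hf : ∀ x ∈ Icc a b, HasDerivAt f (f' x) x) (hf' : MonotoneOn f' (Icc a b)) :
    (b - a) * f' a ≤ f b - f a ∧ f b - f a ≤ (b - a) * f' b := by
  obtain rfl | hlt := hab.eq_or_lt
  · simp
  obtain ⟨c, hc, hslope⟩ := exists_hasDerivAt_eq_slope f f' hlt (HasDerivAt.continuousOn hf)
    fun x hx => hf x (Ioo_subset_Icc_self hx)
  have hmvt : f b - f a = (b - a) * f' c := by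
    rw [hslope, mul_div_cancel₀ _ (sub_pos.2 hlt).ne']
  have hc' : c ∈ Icc a b := Ioo_subset_Icc_self hc
  rw [hmvt]
  exact ⟨mul_le_mul_of_nonneg_left (hf' (left_mem_Icc.2 hab) hc' hc.1.le) (sub_pos.2 hlt).le,
    mul_le_mul_of_nonneg_left (hf' hc' (right_mem_Icc.2 hab) hc.2.le) (sub_pos.2 hlt).le⟩

theorem le_mul_exp_integral_of_hasDerivAt_le_mul {u u' φ : ℝ → ℝ} {a b : ℝ} (hab : a ≤ b)
    (hu : ∀ x ∈ Icc a b, HasDerivAt u (u' x) x) (hpos : ∀ x ∈ Icc a b, 0 < u x)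
    (hφ : IntegrableOn φ (Icc a b)) (hle : ∀ x ∈ Ioo a b, u' x ≤ φ x * u x) :
    u b ≤ u a * exp (∫ x in a..b, φ x) := by
  have hlog : log (u b) - log (u a) ≤ ∫ x in a..b, φ x := by
    refine intervalIntegral.sub_le_integral_of_hasDeriv_right_of_le hab
      ((HasDerivAt.continuousOn hu).log fun x hx => (hpos x hx).ne')
      (fun x hx => ((hu x (Ioo_subset_Icc_self hx)).log
        (hpos x (Ioo_subset_Icc_self hx)).ne').hasDerivWithinAt) hφ fun x hx => ?_
    rw [div_le_iff₀ (hpos x (Ioo_subset_Icc_self hx))]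
    exact hle x hx
  calc u b = exp (log (u b)) := (exp_log (hpos b (right_mem_Icc.2 hab))).symm
    _ ≤ exp (log (u a) + ∫ x in a..b, φ x) := exp_le_exp.2 (by linarith)
    _ = u a * exp (∫ x in a..b, φ x) := by rw [exp_add, exp_log (hpos a (left_mem_Icc.2 hab))]

theorem intervalIntegral_le_setIntegral_Ioi {f : ℝ → ℝ} {a b : ℝ} (hab : a ≤ b)
    (hf : IntegrableOn f (Ioi a)) (hf_nonneg : ∀ x ∈ Ioi a, 0 ≤ f x) :
    ∫ x in a..b, f x ≤ ∫ x in Ioi a, f x := by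
  rw [intervalIntegral.integral_of_le hab]
  exact setIntegral_mono_set hf ((ae_restrict_mem measurableSet_Ioi).mono hf_nonneg)
    Ioc_subset_Ioi_self.eventuallyLE

namespace JacobiEquation

variable {l y y' : ℝ → ℝ}

theorem monotoneOn_deriv (hl : ∀ s : ℝ, 0 ≤ s → 0 ≤ l s)
    (hy : ∀ t : ℝ, 0 ≤ t → HasDerivAt y (y' t) t)
    (hy' : ∀ t : ℝ, 0 ≤ t → HasDerivAt y' (l t * y t) t) (hy0 : y 0 = 0) {b : ℝ}
    (hy'_nonneg : ∀ s ∈ Ioo 0 b, 0 ≤ y' s) : MonotoneOn y' (Icc 0 b) := by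
  have hy_mono : MonotoneOn y (Icc 0 b) :=
    monotoneOn_Icc_of_hasDerivAt_nonneg (fun s hs => hy s hs.1) hy'_nonneg
  refine monotoneOn_Icc_of_hasDerivAt_nonneg (fun s hs => hy' s hs.1) fun s hs => ?_
  have hy_nonneg : 0 ≤ y s :=
    hy0 ▸ hy_mono (left_mem_Icc.2 (hs.1.trans hs.2).le) (Ioo_subset_Icc_self hs) hs.1.le
  exact mul_nonneg (hl s hs.1.le) hy_nonneg

/-- If `y'` had a zero, then on `[0, c]`, with `c` its first zero, `y' ≥ 0` would make `y'`
nondecreasing, forcing `y' c ≥ y' 0 = 1`. -/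
theorem deriv_pos (hl : ∀ s : ℝ, 0 ≤ s → 0 ≤ l s)
    (hy : ∀ t : ℝ, 0 ≤ t → HasDerivAt y (y' t) t)
    (hy' : ∀ t : ℝ, 0 ≤ t → HasDerivAt y' (l t * y t) t) (hy0 : y 0 = 0) (hy'0 : y' 0 = 1)
    {t : ℝ} (ht : 0 ≤ t) : 0 < y' t := by
  by_contra! hneg
  set K := Icc 0 t ∩ y' ⁻¹' Iic 0
  have hK : IsCompact K := isCompact_Icc.of_isClosed_subset
    ((HasDerivAt.continuousOn fun s hs => hy' s hs.1).preimage_isClosed_of_isClosed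
      isClosed_Icc isClosed_Iic) inter_subset_left
  obtain ⟨c, ⟨hc, hy'c⟩, hc_min⟩ := hK.exists_isLeast ⟨t, ⟨ht, le_rfl⟩, hneg⟩
  have hmono : MonotoneOn y' (Icc 0 c) := monotoneOn_deriv hl hy hy' hy0 fun s hs =>
    le_of_not_ge fun hs' => (hc_min ⟨⟨hs.1.le, hs.2.le.trans hc.2⟩, hs'⟩).not_gt hs.2
  have := hmono (left_mem_Icc.2 hc.1) (right_mem_Icc.2 hc.1) hc.1
  simp only [mem_preimage, mem_Iic] at hy'c
  linarith

end JacobiEquation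

theorem jacobi_solution_bounds_general (l : ℝ → ℝ) (b₀ : ℝ)
    (hl_nonneg : ∀ s : ℝ, 0 ≤ s → 0 ≤ l s)
    (hl_int : MeasureTheory.IntegrableOn (fun s => s * l s) (Set.Ioi 0))
    (hb₀ : ∫ s in Set.Ioi (0 : ℝ), s * l s = b₀)
    (y y' : ℝ → ℝ)
    (hy : ∀ t : ℝ, 0 ≤ t → HasDerivAt y (y' t) t)
    (hy' : ∀ t : ℝ, 0 ≤ t → HasDerivAt y' (l t * y t) t)
    (hy0 : y 0 = 0) (hy'0 : y' 0 = 1) :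
    ∀ t : ℝ, 0 ≤ t → t ≤ y t ∧ y t ≤ Real.exp b₀ * t := by
  intro t ht
  have hpos : ∀ s ∈ Icc 0 t, 0 < y' s := fun s hs =>
    JacobiEquation.deriv_pos hl_nonneg hy hy' hy0 hy'0 hs.1
  have hmono : MonotoneOn y' (Icc 0 t) :=
    JacobiEquation.monotoneOn_deriv hl_nonneg hy hy' hy0 fun s hs =>
      (hpos s (Ioo_subset_Icc_self hs)).le
  have hsandwich : ∀ s ∈ Icc 0 t, s ≤ y s ∧ y s ≤ s * y' s := fun s hs => by
    simpa [hy0, hy'0] using mul_deriv_le_sub_le_mul_deriv hs.1 (fun x hx => hy x hx.1)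
      (hmono.mono (Icc_subset_Icc_right hs.2))
  have hgrowth : y' t ≤ exp (∫ s in 0..t, s * l s) := by
    simpa [hy'0] using le_mul_exp_integral_of_hasDerivAt_le_mul ht (fun s hs => hy' s hs.1) hpos
      ((integrableOn_Icc_iff_integrableOn_Ioc).2 (hl_int.mono_set Ioc_subset_Ioi_self))
      fun s hs => by
        rw [mul_comm s, mul_assoc]
        exact mul_le_mul_of_nonneg_left (hsandwich s (Ioo_subset_Icc_self hs)).2
          (hl_nonneg s hs.1.le)
  have hb : ∫ s in 0..t, s * l s ≤ b₀ := hb₀ ▸ intervalIntegral_le_setIntegral_Ioi ht hl_int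
    fun s hs => mul_nonneg (le_of_lt hs) (hl_nonneg s (le_of_lt hs))
  refine ⟨(hsandwich t (right_mem_Icc.2 ht)).1, ?_⟩
  calc y t ≤ t * y' t := (hsandwich t (right_mem_Icc.2 ht)).2
    _ ≤ t * exp b₀ := mul_le_mul_of_nonneg_left (hgrowth.trans (exp_le_exp.2 hb)) ht
    _ = exp b₀ * t := mul_comm _ _

theorem jacobi_solution_bounds (l : ℝ → ℝ) (b₀ : ℝ)
    (hl_nonneg : ∀ s : ℝ, 0 ≤ s → 0 ≤ l s)
    (hl_anti : AntitoneOn l (Set.Ici 0))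
    (hl_int : MeasureTheory.IntegrableOn (fun s => s * l s) (Set.Ioi 0))
    (hb₀ : ∫ s in Set.Ioi (0 : ℝ), s * l s = b₀)
    (y y' : ℝ → ℝ)
    (hy : ∀ t : ℝ, 0 ≤ t → HasDerivAt y (y' t) t)
    (hy' : ∀ t : ℝ, 0 ≤ t → HasDerivAt y' (l t * y t) t)
    (hy0 : y 0 = 0) (hy'0 : y' 0 = 1) :
    ∀ t : ℝ, 0 ≤ t → t ≤ y t ∧ y t ≤ Real.exp b₀ * t :=
  jacobi_solution_bounds_general l b₀ hl_nonneg hl_int hb₀ y y' hy hy' hy0 hy'0
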